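/- arXiv:1707.00213 — 3 statements merged into one kernel-verified Lean document; each statement's English description precedes it below -/
import Mathlib

section
/- In the setting of the invariant ξ attached to a quaternion embedding (B, α1, α2) of a pair of quadratic étale F-algebras (K1, K2): the triple (B, α1, α2) is regular (i.e., α1(K1) ∪ α2(K2) generates B as an F-algebra) if and only if ξ is a unit in K3. -/
/-!
Polarizing `Nrd (α x) = Tr_{K3/F} (ξ x τ3 x)` and using `Tr_{K3/F} (z + τ3 z) = Tr_{K/F} z`
(multiplication by `z` followed by `τ3 = σ1 ⊗ σ2` is traceless on `K`, because `σi` composed with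
a multiplication is traceless on each quadratic factor) gives
`Nrd (α (x + y)) - Nrd (α x) - Nrd (α y) = Tr_{K/F} (ξ x τ3 y)`.

For the standard involution, `y x` lies in the span of `1, x, y, x y`, so `α K` is a subalgebra;
hence regularity means that `α` is onto, i.e. bijective since both sides have dimension 4.
If `α` is bijective and `ξ η = 0` with `η ≠ 0`, then `α η` is orthogonal to `B` for the polar form
of `Nrd`, which is nondegenerate on the central simple algebra `B`. If `ξ` is a unit and
`α x = 0`, then `ξ x` is orthogonal to `K` for the trace form, which is nondegenerate because
`K1` and `K2` are étale.
-/

open scoped TensorProduct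

section Quadratic

variable {F K : Type*} [Field F] [CommRing K] [Algebra F K]

structure QuadraticBasis (σ : K ≃ₐ[F] K) where
  a : K
  t : F
  n : F
  basis : Module.Basis (Fin 2) F K
  basis_zero : basis 0 = 1
  basis_one : basis 1 = a
  sigma_a : σ a = algebraMap F K t - a
  a_mul_a : a * a = algebraMap F K t * a - algebraMap F K n

theorem exists_basis_one_of_notMem_range (hK : Module.finrank F K = 2) {x : K}
    (hx : x ∉ Set.range (algebraMap F K)) :
    ∃ b : Module.Basis (Fin 2) F K, b 0 = 1 ∧ b 1 = x := by
  have : Nontrivial K := Module.nontrivial_of_finrank_pos (R := F) (by omega)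
  have hli : LinearIndependent F ![x, 1] := by
    refine linearIndependent_fin2.mpr ⟨one_ne_zero, fun c hc => hx ⟨c, ?_⟩⟩
    simpa [Algebra.algebraMap_eq_smul_one] using hc
  have hli' : LinearIndependent F ![1, x] := by
    convert hli.comp _ (Equiv.swap (0 : Fin 2) 1).injective
    ext i; fin_cases i <;> rfl
  exact ⟨basisOfLinearIndependentOfCardEqFinrank hli' (by simp [hK]),
    by simp, by simp⟩

theorem AlgEquiv.eq_refl_of_basis_one {σ : K ≃ₐ[F] K} (b : Module.Basis (Fin 2) F K)
    (hb0 : b 0 = 1) (hb1 : σ (b 1) = b 1) : σ = AlgEquiv.refl := by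
  refine AlgEquiv.ext fun y => LinearMap.congr_fun (f := σ.toLinearMap) (g := LinearMap.id)
    (b.ext fun i => ?_) y
  fin_cases i <;> simp [hb0, hb1]

theorem mem_range_of_apply_eq_self (hK : Module.finrank F K = 2) {σ : K ≃ₐ[F] K}
    (hσ : σ ≠ AlgEquiv.refl) {x : K} (hx : σ x = x) : x ∈ Set.range (algebraMap F K) := by
  by_contra hnot
  obtain ⟨b, hb0, hb1⟩ := exists_basis_one_of_notMem_range hK hnot
  exact hσ (AlgEquiv.eq_refl_of_basis_one b hb0 (hb1 ▸ hx))

theorem QuadraticBasis.nonempty (hK : Module.finrank F K = 2) {σ : K ≃ₐ[F] K}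
    (hσ : Function.Involutive σ) (hσne : σ ≠ AlgEquiv.refl) : Nonempty (QuadraticBasis σ) := by
  obtain ⟨a, ha⟩ : ∃ a, σ a ≠ a := by
    by_contra! h
    exact hσne (AlgEquiv.ext h)
  have ha' : a ∉ Set.range (algebraMap F K) := by
    rintro ⟨c, rfl⟩
    exact ha (σ.commutes c)
  obtain ⟨b, hb0, hb1⟩ := exists_basis_one_of_notMem_range hK ha'
  obtain ⟨t, ht⟩ := mem_range_of_apply_eq_self hK hσne (x := a + σ a)
    (by rw [map_add, hσ a, add_comm])
  obtain ⟨n, hn⟩ := mem_range_of_apply_eq_self hK hσne (x := a * σ a)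
    (by rw [map_mul, hσ a, mul_comm])
  exact ⟨⟨a, t, n, b, hb0, hb1, by rw [ht]; ring, by rw [ht, hn]; ring⟩⟩

namespace QuadraticBasis

variable {σ : K ≃ₐ[F] K}

theorem repr_apply_zero (q : QuadraticBasis σ) (p r : F) :
    q.basis.repr (algebraMap F K p + algebraMap F K r * q.a) 0 = p := by
  rw [Algebra.algebraMap_eq_smul_one, ← Algebra.smul_def, ← q.basis_zero, ← q.basis_one]
  simp

theorem repr_apply_one (q : QuadraticBasis σ) (p r : F) :
    q.basis.repr (algebraMap F K p + algebraMap F K r * q.a) 1 = r := by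
  rw [Algebra.algebraMap_eq_smul_one, ← Algebra.smul_def, ← q.basis_zero, ← q.basis_one]
  simp

theorem trace_eq (q : QuadraticBasis σ) (f : Module.End F K) :
    LinearMap.trace F K f = q.basis.repr (f 1) 0 + q.basis.repr (f q.a) 1 := by
  rw [LinearMap.trace_eq_matrix_trace F q.basis, Matrix.trace_fin_two, LinearMap.toMatrix_apply,
    LinearMap.toMatrix_apply, q.basis_zero, q.basis_one]

theorem sigma_a_eq (q : QuadraticBasis σ) :
    σ q.a = algebraMap F K q.t + algebraMap F K (-1) * q.a := by
  simp [q.sigma_a, sub_eq_add_neg]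

theorem trace_a (q : QuadraticBasis σ) : Algebra.trace F K q.a = q.t := by
  rw [Algebra.trace_apply, q.trace_eq]
  have h1 : Algebra.lmul F K q.a 1 = algebraMap F K 0 + algebraMap F K 1 * q.a := by simp
  have ha : Algebra.lmul F K q.a q.a = algebraMap F K (-q.n) + algebraMap F K q.t * q.a := by
    show q.a * q.a = _; rw [q.a_mul_a, map_neg]; ring
  rw [h1, ha, q.repr_apply_zero, q.repr_apply_one, zero_add]

theorem algebraMap_trace (q : QuadraticBasis σ) (c : K) :
    algebraMap F K (Algebra.trace F K c) = c + σ c := by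
  have h : (Algebra.linearMap F K ∘ₗ Algebra.trace F K : K →ₗ[F] K) =
      LinearMap.id + σ.toLinearMap := by
    refine Module.Basis.ext q.basis fun i => ?_
    fin_cases i
    · have h2 : Algebra.trace F K 1 = 2 := by
        have := Module.Finite.of_basis q.basis
        rw [Algebra.trace_apply, map_one, LinearMap.trace_one, Module.finrank_eq_card_basis q.basis]
        simp
      show algebraMap F K (Algebra.trace F K (q.basis 0)) = q.basis 0 + σ (q.basis 0)
      rw [q.basis_zero, h2, map_one, map_ofNat, one_add_one_eq_two]
    · simp [q.basis_one, q.trace_a, q.sigma_a]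
  exact LinearMap.congr_fun h c

theorem trace_comp_mulLeft (q : QuadraticBasis σ) (c : K) :
    LinearMap.trace F K (σ.toLinearMap ∘ₗ LinearMap.mulLeft F c) = 0 := by
  have h : LinearMap.trace F K ∘ₗ LinearMap.llcomp F K K K σ.toLinearMap ∘ₗ
      (Algebra.lmul F K).toLinearMap = 0 := by
    refine Module.Basis.ext q.basis fun i => ?_
    simp only [LinearMap.comp_apply, LinearMap.zero_apply, AlgHom.toLinearMap_apply,
      LinearMap.llcomp_apply, q.trace_eq]
    fin_cases i
    · have h1 : σ 1 = algebraMap F K 1 + algebraMap F K 0 * q.a := by simp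
      show q.basis.repr (σ (q.basis 0 * 1)) 0 + q.basis.repr (σ (q.basis 0 * q.a)) 1 = 0
      rw [q.basis_zero, one_mul, one_mul, h1, q.sigma_a_eq, q.repr_apply_zero, q.repr_apply_one]
      ring
    · have ha : σ (q.a * q.a) = algebraMap F K (q.t ^ 2 - q.n) + algebraMap F K (-q.t) * q.a := by
        rw [map_mul, q.sigma_a, map_sub, map_pow, map_neg]
        linear_combination q.a_mul_a
      show q.basis.repr (σ (q.basis 1 * 1)) 0 + q.basis.repr (σ (q.basis 1 * q.a)) 1 = 0
      rw [q.basis_one, mul_one, q.sigma_a_eq, ha, q.repr_apply_zero, q.repr_apply_one]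
      ring
  exact LinearMap.congr_fun h c

/-- `(a - σ a)² = t² - 4n` is a scalar, nonzero because an étale algebra is reduced and
`σ a ≠ a`. -/
theorem isUnit_a_sub_sigma_a [Algebra.Etale F K] (q : QuadraticBasis σ)
    (hσ : σ ≠ AlgEquiv.refl) : IsUnit (q.a - σ q.a) := by
  have hsq : (q.a - σ q.a) * (q.a - σ q.a) = algebraMap F K (q.t ^ 2 - 4 * q.n) := by
    rw [q.sigma_a, map_sub, map_pow, map_mul, map_ofNat]
    linear_combination 4 * q.a_mul_a
  have hd : q.t ^ 2 - 4 * q.n ≠ 0 := by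
    intro hd
    have : IsReduced K := Algebra.FormallyUnramified.isReduced_of_field F K
    have h0 : q.a - σ q.a = 0 := IsReduced.eq_zero _ ⟨2, by rw [sq, hsq, hd, map_zero]⟩
    refine hσ (AlgEquiv.eq_refl_of_basis_one q.basis q.basis_zero ?_)
    rw [q.basis_one, (sub_eq_zero.mp h0).symm]
  exact isUnit_of_mul_isUnit_left (hsq ▸ (isUnit_iff_ne_zero.mpr hd).map (algebraMap F K))

theorem separatingLeft_traceForm [Algebra.Etale F K] (q : QuadraticBasis σ)
    (hσ : σ ≠ AlgEquiv.refl) : (Algebra.traceForm F K).SeparatingLeft := by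
  intro x hx
  have h1 : x + σ x = 0 := by
    rw [← q.algebraMap_trace, ← mul_one x, ← Algebra.traceForm_apply, hx, map_zero]
  have ha : x * q.a + σ x * σ q.a = 0 := by
    rw [← map_mul, ← q.algebraMap_trace, ← Algebra.traceForm_apply, hx, map_zero]
  have hxδ : x * (q.a - σ q.a) = 0 := by linear_combination ha - σ q.a * h1
  exact (q.isUnit_a_sub_sigma_a hσ).mul_left_eq_zero.mp hxδ

end QuadraticBasis

section TensorProduct

variable {F A C : Type*} [Field F] [CommRing A] [Algebra F A] [CommRing C] [Algebra F C]

theorem Algebra.TensorProduct.congr_involutive {σ : A ≃ₐ[F] A} {τ : C ≃ₐ[F] C}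
    (hσ : Function.Involutive σ) (hτ : Function.Involutive τ) :
    Function.Involutive (Algebra.TensorProduct.congr σ τ) := by
  intro z
  induction z using TensorProduct.induction_on with
  | zero => simp
  | tmul x y => simp [hσ x, hτ y]
  | add z w hz hw => rw [map_add, map_add, hz, hw]

variable [FiniteDimensional F A] [FiniteDimensional F C]

theorem trace_map_comp_mulLeft_tmul (f : Module.End F A) (g : Module.End F C) (x : A) (y : C) :
    LinearMap.trace F (A ⊗[F] C) (TensorProduct.map f g ∘ₗ LinearMap.mulLeft F (x ⊗ₜ y)) =
      LinearMap.trace F A (f ∘ₗ LinearMap.mulLeft F x) *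
        LinearMap.trace F C (g ∘ₗ LinearMap.mulLeft F y) := by
  rw [← LinearMap.trace_tensorProduct']
  congr 1
  exact TensorProduct.ext' fun _ _ => by simp

theorem Algebra.trace_tmul (x : A) (y : C) :
    Algebra.trace F (A ⊗[F] C) (x ⊗ₜ y) = Algebra.trace F A x * Algebra.trace F C y := by
  show LinearMap.trace F _ (LinearMap.mulLeft F _) =
    LinearMap.trace F _ (LinearMap.mulLeft F x) * LinearMap.trace F _ (LinearMap.mulLeft F y)
  simpa [TensorProduct.map_id] using trace_map_comp_mulLeft_tmul LinearMap.id LinearMap.id x y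

theorem trace_congr_comp_mulLeft_eq_zero {σ : A ≃ₐ[F] A} (τ : C ≃ₐ[F] C)
    (hσ : ∀ c, LinearMap.trace F A (σ.toLinearMap ∘ₗ LinearMap.mulLeft F c) = 0)
    (z : A ⊗[F] C) :
    LinearMap.trace F (A ⊗[F] C)
      ((Algebra.TensorProduct.congr σ τ).toLinearMap ∘ₗ LinearMap.mulLeft F z) = 0 := by
  induction z using TensorProduct.induction_on with
  | zero => simp
  | tmul x y =>
    exact (trace_map_comp_mulLeft_tmul σ.toLinearMap τ.toLinearMap x y).trans
      (by rw [hσ, zero_mul])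
  | add z w hz hw =>
    have hadd : LinearMap.mulLeft F (z + w) = LinearMap.mulLeft F z + LinearMap.mulLeft F w :=
      LinearMap.ext fun _ => add_mul _ _ _
    rw [hadd, LinearMap.comp_add, map_add, hz, hw, add_zero]

theorem separatingLeft_traceForm_tensorProduct (hA : (Algebra.traceForm F A).SeparatingLeft)
    (hC : (Algebra.traceForm F C).SeparatingLeft) :
    (Algebra.traceForm F (A ⊗[F] C)).SeparatingLeft := by
  intro x hx
  let b := Module.finBasis F C
  obtain ⟨c, rfl⟩ := TensorProduct.eq_repr_basis_right b x
  have hc : ∀ i v, Algebra.traceForm F A (c i) v = 0 := by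
    intro i v
    refine Fintype.linearIndependent_iff.mp b.linearIndependent
      (fun j => Algebra.trace F A (c j * v)) (hC _ fun w => ?_) i
    simpa [Finsupp.sum_fintype, Finset.sum_mul, Algebra.TensorProduct.tmul_mul_tmul,
      Algebra.trace_tmul, Finset.smul_sum, smul_mul_assoc] using hx (v ⊗ₜ w)
  obtain rfl : c = 0 := Finsupp.ext fun i => hA _ (hc i)
  simp

end TensorProduct

section FixedSubalgebra

variable {F A : Type*} [Field F] [CommRing A] [Algebra F A]

abbrev fixedSubalgebra (τ : A ≃ₐ[F] A) : Subalgebra F A :=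
  AlgHom.equalizer (τ : A →ₐ[F] A) (AlgHom.id F A)

variable {τ : A ≃ₐ[F] A}

theorem apply_eq_of_mem_fixedSubalgebra {s : A}
    (hs : s ∈ fixedSubalgebra τ) : τ s = s := hs

theorem add_apply_mem_fixedSubalgebra (hτ : Function.Involutive τ) (z : A) :
    z + τ z ∈ fixedSubalgebra τ := by
  show τ (z + τ z) = z + τ z
  rw [map_add, hτ z, add_comm]

theorem trace_add_apply_eq_trace [FiniteDimensional F A] (hτ : Function.Involutive τ)
    (htr : ∀ z, LinearMap.trace F A (τ.toLinearMap ∘ₗ LinearMap.mulLeft F z) = 0) (z : A) :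
    Algebra.trace F (fixedSubalgebra τ)
      ⟨z + τ z, add_apply_mem_fixedSubalgebra hτ z⟩ = Algebra.trace F A z := by
  set S := fixedSubalgebra τ
  -- multiplication by `z + τ z` on `S` is `p ∘ (z * ·) ∘ incl`; now cycle the trace.
  let p : A →ₗ[F] S := LinearMap.codRestrict S.toSubmodule (LinearMap.id + τ.toLinearMap)
    (add_apply_mem_fixedSubalgebra hτ)
  have hfac : Algebra.lmul F S ⟨z + τ z, add_apply_mem_fixedSubalgebra hτ z⟩ =
      p ∘ₗ LinearMap.mulLeft F z ∘ₗ S.toSubmodule.subtype := by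
    refine LinearMap.ext fun s => Subtype.ext ?_
    show (z + τ z) * s = z * s + τ (z * s)
    rw [map_mul, apply_eq_of_mem_fixedSubalgebra s.2, add_mul]
  rw [Algebra.trace_apply, hfac, ← LinearMap.comp_assoc, LinearMap.trace_comp_comm']
  show LinearMap.trace F A ((LinearMap.id + τ.toLinearMap) ∘ₗ LinearMap.mulLeft F z) = _
  rw [LinearMap.add_comp, map_add, htr, add_zero, LinearMap.id_comp]
  rfl

theorem polar_eq_trace_mul [FiniteDimensional F A] (hτ : Function.Involutive τ)
    (htr : ∀ z, LinearMap.trace F A (τ.toLinearMap ∘ₗ LinearMap.mulLeft F z) = 0)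
    (ξ : fixedSubalgebra τ) (Q : A → F)
    (hQ : ∀ (x : A) (h : (ξ : A) * x * τ x ∈ fixedSubalgebra τ),
      Q x = Algebra.trace F (fixedSubalgebra τ) ⟨(ξ : A) * x * τ x, h⟩) (x y : A) :
    QuadraticMap.polar Q x y = Algebra.trace F A (ξ * x * τ y) := by
  have hξ : τ ξ = ξ := apply_eq_of_mem_fixedSubalgebra ξ.2
  have hmem (x : A) : (ξ : A) * x * τ x ∈ fixedSubalgebra τ := by
    show τ (ξ * x * τ x) = ξ * x * τ x
    rw [map_mul, map_mul, hξ, hτ x, mul_right_comm]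
  have hsplit : (⟨ξ * (x + y) * τ (x + y), hmem (x + y)⟩ : fixedSubalgebra τ) =
      ⟨ξ * x * τ x, hmem x⟩ + ⟨ξ * y * τ y, hmem y⟩ +
        ⟨ξ * x * τ y + τ (ξ * x * τ y), add_apply_mem_fixedSubalgebra hτ _⟩ := by
    apply Subtype.ext
    simp only [Subalgebra.coe_add, map_add, map_mul, hξ, hτ y]
    ring
  rw [QuadraticMap.polar, hQ _ (hmem (x + y)), hQ _ (hmem x), hQ _ (hmem y), hsplit, map_add,
    map_add, trace_add_apply_eq_trace hτ htr]
  ring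

end FixedSubalgebra

-- The reduced trace of `z` appears as `polar Nrd z 1` (see `IsStandardInvolution.add_apply`).
structure IsStandardInvolution (F : Type*) {B : Type*} [CommRing F] [Ring B] [Algebra F B]
    (ι : B → B) (Nrd : B → F) : Prop where
  map_add : ∀ a b, ι (a + b) = ι a + ι b
  map_mul : ∀ a b, ι (a * b) = ι b * ι a
  map_algebraMap : ∀ c, ι (algebraMap F B c) = algebraMap F B c
  algebraMap_nrd : ∀ b, algebraMap F B (Nrd b) = b * ι b

namespace IsStandardInvolution

open QuadraticMap

variable {F B : Type*} [CommRing F] [Ring B] [Algebra F B] {ι : B → B} {Nrd : B → F}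

theorem map_one (h : IsStandardInvolution F ι Nrd) : ι 1 = 1 := by
  simpa using h.map_algebraMap 1

theorem map_zero (h : IsStandardInvolution F ι Nrd) : ι 0 = 0 :=
  (AddMonoidHom.mk' ι h.map_add).map_zero

theorem map_neg (h : IsStandardInvolution F ι Nrd) (a : B) : ι (-a) = -ι a :=
  (AddMonoidHom.mk' ι h.map_add).map_neg a

theorem map_sub (h : IsStandardInvolution F ι Nrd) (a b : B) : ι (a - b) = ι a - ι b :=
  (AddMonoidHom.mk' ι h.map_add).map_sub a b

theorem algebraMap_polar (h : IsStandardInvolution F ι Nrd) (u v : B) :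
    algebraMap F B (polar Nrd u v) = u * ι v + v * ι u := by
  simp only [polar, _root_.map_sub, h.algebraMap_nrd, h.map_add]
  noncomm_ring

theorem add_apply (h : IsStandardInvolution F ι Nrd) (z : B) :
    z + ι z = algebraMap F B (polar Nrd z 1) := by
  rw [h.algebraMap_polar, h.map_one, mul_one, one_mul]

theorem apply_eq (h : IsStandardInvolution F ι Nrd) (z : B) :
    ι z = algebraMap F B (polar Nrd z 1) - z := by
  rw [← h.add_apply]; abel

theorem apply_apply (h : IsStandardInvolution F ι Nrd) (z : B) : ι (ι z) = z := by
  rw [h.apply_eq z, h.map_sub, h.map_algebraMap, h.apply_eq z]; abel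

theorem mul_add_mul (h : IsStandardInvolution F ι Nrd) (x y : B) :
    x * y + y * x = algebraMap F B (polar Nrd (x * y) 1 - polar Nrd x 1 * polar Nrd y 1) +
      polar Nrd y 1 • x + polar Nrd x 1 • y := by
  have key := h.map_mul x y
  rw [h.apply_eq (x * y), h.apply_eq x, h.apply_eq y, sub_mul, mul_sub, mul_sub,
    ← Algebra.commutes _ y, ← _root_.map_mul] at key
  rw [Algebra.smul_def, Algebra.smul_def, mul_comm (polar Nrd x 1), _root_.map_sub]
  linear_combination (norm := noncomm_ring) -key

theorem add_apply_mul_comm (h : IsStandardInvolution F ι Nrd) (x y : B) :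
    x * y + ι (x * y) = y * x + ι (y * x) := by
  have key := (h.mul_add_mul x y).symm.trans ((add_comm _ _).trans (h.mul_add_mul y x))
  rw [_root_.map_sub, _root_.map_sub, mul_comm (polar Nrd y 1)] at key
  rw [h.add_apply, h.add_apply]
  linear_combination (norm := abel) key

theorem mul_comm_of_forall_add_apply_eq_zero (h : IsStandardInvolution F ι Nrd)
    (h0 : ∀ w, w + ι w = 0) (x y : B) : x * y = y * x := by
  have hneg (w : B) : ι w = -w := eq_neg_of_add_eq_zero_right (h0 w)
  have htwo : (2 : B) = 0 := by simpa [h.map_one, one_add_one_eq_two] using h0 1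
  have hself (w : B) : -w = w := by
    rw [neg_eq_iff_add_eq_zero, ← two_mul, htwo, zero_mul]
  calc x * y = ι (x * y) := by rw [hneg, hself]
    _ = y * x := by rw [h.map_mul, hneg, hneg, neg_mul_neg]

theorem eq_zero_of_forall_add_apply_mul_eq_zero {F : Type*} [Field F] [Algebra F B]
    [Algebra.IsCentral F B] [IsSimpleRing B] {Nrd : B → F} (h : IsStandardInvolution F ι Nrd)
    (hB : Module.finrank F B ≠ 1) {u : B} (hu : ∀ w, u * w + ι (u * w) = 0) : u = 0 := by
  -- The radical of the reduced trace form is a two-sided ideal; if it were `⊤`, then `ι = -id`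
  -- in characteristic 2 and `B` would be commutative.
  let I : TwoSidedIdeal B := .mk' {u | ∀ w, u * w + ι (u * w) = 0}
    (fun w => by rw [zero_mul, h.map_zero, add_zero])
    (fun {x y} hx hy w => by
      rw [add_mul, h.map_add, add_add_add_comm, hx w, hy w, add_zero])
    (fun {x} hx w => by rw [neg_mul, h.map_neg, ← neg_add, hx w, neg_zero])
    (fun {x y} hy w => by rw [mul_assoc, h.add_apply_mul_comm, mul_assoc, hy])
    (fun {x y} hx w => by rw [mul_assoc, hx])
  rcases IsSimpleRing.simple.eq_bot_or_eq_top I with hI | hI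
  · have hmem : u ∈ I := (TwoSidedIdeal.mem_mk' ..).mpr hu
    rwa [hI, TwoSidedIdeal.mem_bot] at hmem
  · have h1 : (1 : B) ∈ I := hI ▸ TwoSidedIdeal.mem_top B
    have hcomm := h.mul_comm_of_forall_add_apply_eq_zero fun w => by
      simpa using (TwoSidedIdeal.mem_mk' ..).mp h1 w
    refine absurd ?_ hB
    rw [← Subalgebra.bot_eq_top_iff_finrank_eq_one, eq_top_iff]
    intro x _
    obtain ⟨c, rfl⟩ := (Algebra.IsCentral.mem_center_iff F).mp
      (Subalgebra.mem_center_iff.mpr fun g => hcomm g x)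
    exact Subalgebra.algebraMap_mem _ c

theorem eq_zero_of_forall_polar_eq_zero {F : Type*} [Field F] [Algebra F B]
    [Algebra.IsCentral F B] [IsSimpleRing B] {Nrd : B → F} (h : IsStandardInvolution F ι Nrd)
    (hB : Module.finrank F B ≠ 1) {u : B} (hu : ∀ v, polar Nrd u v = 0) : u = 0 :=
  h.eq_zero_of_forall_add_apply_mul_eq_zero hB fun w => by
    have key := h.algebraMap_polar u (ι w)
    rw [hu, RingHom.map_zero, h.apply_apply] at key
    rw [h.map_mul, key]

end IsStandardInvolution

section Embedding

open QuadraticMap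

variable {F K1 K2 B : Type*} [CommRing F] [CommRing K1] [CommRing K2] [Ring B]
  [Algebra F K1] [Algebra F K2] [Algebra F B] {ι : B → B} {Nrd : B → F}
  {α1 : K1 →ₐ[F] B} {α2 : K2 →ₐ[F] B} {α : K1 ⊗[F] K2 →ₗ[F] B}

theorem exists_apply_eq_mul (h : IsStandardInvolution F ι Nrd)
    (hα : ∀ x y, α (x ⊗ₜ y) = α1 x * α2 y) (x : K1) (y : K2) : ∃ s, α s = α2 y * α1 x := by
  have key := h.mul_add_mul (α1 x) (α2 y)
  refine ⟨(polar Nrd (α1 x * α2 y) 1 - polar Nrd (α1 x) 1 * polar Nrd (α2 y) 1) •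
      (1 : K1 ⊗[F] K2) - x ⊗ₜ y + polar Nrd (α2 y) 1 • (x ⊗ₜ 1) +
      polar Nrd (α1 x) 1 • ((1 : K1) ⊗ₜ y), ?_⟩
  rw [Algebra.TensorProduct.one_def]
  simp only [map_add, map_sub, map_smul, hα, map_one, mul_one, one_mul]
  simp only [Algebra.smul_def, mul_one] at key ⊢
  linear_combination (norm := noncomm_ring) -key

theorem apply_mul_mem_range (h : IsStandardInvolution F ι Nrd)
    (hα : ∀ x y, α (x ⊗ₜ y) = α1 x * α2 y) (z w : K1 ⊗[F] K2) :
    α z * α w ∈ LinearMap.range α := by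
  have hleft1 (x : K1) (w : K1 ⊗[F] K2) : α1 x * α w = α ((x ⊗ₜ 1) * w) := by
    induction w using TensorProduct.induction_on with
    | zero => simp
    | tmul x' y' => simp [hα, Algebra.TensorProduct.tmul_mul_tmul, mul_assoc]
    | add w w' hw hw' => simp [mul_add, hw, hw']
  have hright2 (w : K1 ⊗[F] K2) (y : K2) : α w * α2 y = α (w * (1 ⊗ₜ y)) := by
    induction w using TensorProduct.induction_on with
    | zero => simp
    | tmul x' y' => simp [hα, Algebra.TensorProduct.tmul_mul_tmul, mul_assoc]
    | add w w' hw hw' => simp [add_mul, hw, hw']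
  have hleft2 (y : K2) (w : K1 ⊗[F] K2) : α2 y * α w ∈ LinearMap.range α := by
    induction w using TensorProduct.induction_on with
    | zero => simp
    | tmul x' y' =>
      obtain ⟨s, hs⟩ := exists_apply_eq_mul h hα x' y
      rw [hα, ← mul_assoc, ← hs, hright2]
      exact LinearMap.mem_range_self α _
    | add w w' hw hw' => rw [map_add, mul_add]; exact add_mem hw hw'
  induction z using TensorProduct.induction_on with
  | zero => simp
  | tmul x y =>
    obtain ⟨w', hw'⟩ := hleft2 y w
    rw [hα, mul_assoc, ← hw', hleft1]
    exact LinearMap.mem_range_self α _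
  | add z z' hz hz' => rw [map_add, add_mul]; exact add_mem hz hz'

theorem adjoin_range_union_eq_top_iff (h : IsStandardInvolution F ι Nrd)
    (hα : ∀ x y, α (x ⊗ₜ y) = α1 x * α2 y) :
    Algebra.adjoin F (Set.range α1 ∪ Set.range α2) = ⊤ ↔ Function.Surjective α := by
  constructor
  · intro htop
    have hone : α 1 = 1 := by rw [Algebra.TensorProduct.one_def, hα, map_one, map_one, mul_one]
    let S : Subalgebra F B := (LinearMap.range α).toSubalgebra ⟨1, hone⟩
      fun _ _ ⟨z, hz⟩ ⟨w, hw⟩ => hz ▸ hw ▸ apply_mul_mem_range h hα z w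
    have hle : Algebra.adjoin F (Set.range α1 ∪ Set.range α2) ≤ S := by
      refine Algebra.adjoin_le ?_
      rintro _ (⟨x, rfl⟩ | ⟨y, rfl⟩)
      · exact ⟨x ⊗ₜ 1, by simp [hα]⟩
      · exact ⟨1 ⊗ₜ y, by simp [hα]⟩
    intro b
    exact (htop ▸ hle) Algebra.mem_top
  · intro hsurj
    rw [eq_top_iff]
    rintro b -
    obtain ⟨z, rfl⟩ := hsurj b
    induction z using TensorProduct.induction_on with
    | zero => simp
    | tmul x y =>
      rw [hα]
      exact mul_mem (Algebra.subset_adjoin (Or.inl ⟨x, rfl⟩))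
        (Algebra.subset_adjoin (Or.inr ⟨y, rfl⟩))
    | add z z' hz hz' => rw [map_add]; exact add_mem hz hz'

end Embedding

section Invariant

open QuadraticMap

variable {F A B : Type*} [Field F] [CommRing A] [Algebra F A] [Ring B] [Algebra F B]
  {ι : B → B} {Nrd : B → F} {α : A →ₗ[F] B}

theorem isUnit_of_bijective [FiniteDimensional F A] [Algebra.IsCentral F B] [IsSimpleRing B]
    (h : IsStandardInvolution F ι Nrd) (hB : Module.finrank F B ≠ 1) (hα : Function.Bijective α)
    {S : Subalgebra F A} (ξ : S) {τ : A → A}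
    (hpolar : ∀ x y, polar Nrd (α x) (α y) = Algebra.trace F A (ξ * x * τ y)) : IsUnit ξ := by
  have : IsArtinianRing S := IsArtinianRing.of_finite F S
  by_contra hξ
  rw [IsArtinianRing.isUnit_iff_mem_nonZeroDivisors, mem_nonZeroDivisors_iff_left] at hξ
  obtain ⟨η, hξη, hη⟩ := not_forall₂.mp hξ
  have hαη : α η = 0 := h.eq_zero_of_forall_polar_eq_zero hB fun v => by
    obtain ⟨y, rfl⟩ := hα.2 v
    rw [hpolar, ← Subalgebra.coe_mul, hξη, ZeroMemClass.coe_zero, zero_mul, map_zero]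
  exact hη (Subtype.ext (hα.1 (hαη.trans (map_zero α).symm)))

theorem injective_of_isUnit [Nontrivial B] (h : IsStandardInvolution F ι Nrd)
    (hsep : (Algebra.traceForm F A).SeparatingLeft) {ξ : A} (hξ : IsUnit ξ) {τ : A → A}
    (hτ : Function.Surjective τ)
    (hpolar : ∀ x y, polar Nrd (α x) (α y) = Algebra.trace F A (ξ * x * τ y)) :
    Function.Injective α := by
  have hNrd0 : Nrd 0 = 0 :=
    (algebraMap F B).injective (by rw [h.algebraMap_nrd, zero_mul, map_zero])
  refine (injective_iff_map_eq_zero α).mpr fun x hx => hξ.mul_right_eq_zero.mp ?_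
  refine hsep _ fun u => ?_
  obtain ⟨y, rfl⟩ := hτ u
  rw [Algebra.traceForm_apply, ← hpolar, hx, polar, zero_add, hNrd0, sub_zero, sub_self]

end Invariant

theorem stmt2_general (F : Type u) [Field F]
    (K1 K2 : Type u) [CommRing K1] [CommRing K2] [Algebra F K1] [Algebra F K2]
    [Algebra.Etale F K1] [Algebra.Etale F K2]
    (hK1 : Module.finrank F K1 = 2) (hK2 : Module.finrank F K2 = 2)
    (σ1 : K1 ≃ₐ[F] K1) (σ2 : K2 ≃ₐ[F] K2)
    (hσ1 : Function.Involutive σ1) (hσ2 : Function.Involutive σ2)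
    (hσ1ne : σ1 ≠ AlgEquiv.refl) (hσ2ne : σ2 ≠ AlgEquiv.refl)
    (B : Type u) [Ring B] [Algebra F B]
    [Algebra.IsCentral F B] [IsSimpleRing B] (hB : Module.finrank F B = 4)
    (ι : B → B) (Nrd : B → F)
    (hι_add : ∀ a b : B, ι (a + b) = ι a + ι b)
    (hι_mul : ∀ a b : B, ι (a * b) = ι b * ι a)
    (hι_alg : ∀ c : F, ι (algebraMap F B c) = algebraMap F B c)
    (hNrd : ∀ b : B, algebraMap F B (Nrd b) = b * ι b)
    (α1 : K1 →ₐ[F] B) (α2 : K2 →ₐ[F] B)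
    (α : K1 ⊗[F] K2 →ₗ[F] B)
    (hα : ∀ (x : K1) (y : K2), α (x ⊗ₜ[F] y) = α1 x * α2 y)
    (τ3 : (K1 ⊗[F] K2) ≃ₐ[F] (K1 ⊗[F] K2)) (hτ3 : τ3 = Algebra.TensorProduct.congr σ1 σ2)
    (K3 : Subalgebra F (K1 ⊗[F] K2))
    (hK3 : K3 = AlgHom.equalizer (τ3 : (K1 ⊗[F] K2) →ₐ[F] (K1 ⊗[F] K2))
        (AlgHom.id F (K1 ⊗[F] K2)))
    -- `ξ` is the invariant of `(B, α1, α2)`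
    (ξ : K3)
    (hξ : ∀ (x : K1 ⊗[F] K2) (h : (ξ : K1 ⊗[F] K2) * x * τ3 x ∈ K3),
        Nrd (α x) = Algebra.trace F K3 ⟨(ξ : K1 ⊗[F] K2) * x * τ3 x, h⟩) :
    Algebra.adjoin F (Set.range α1 ∪ Set.range α2) = ⊤ ↔ IsUnit ξ := by
  subst hK3 hτ3
  have : FiniteDimensional F K1 := Module.finite_of_finrank_eq_succ hK1
  have : FiniteDimensional F K2 := Module.finite_of_finrank_eq_succ hK2
  have : FiniteDimensional F B := Module.finite_of_finrank_eq_succ hB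
  obtain ⟨q1⟩ := QuadraticBasis.nonempty hK1 hσ1 hσ1ne
  obtain ⟨q2⟩ := QuadraticBasis.nonempty hK2 hσ2 hσ2ne
  have hι : IsStandardInvolution F ι Nrd := ⟨hι_add, hι_mul, hι_alg, hNrd⟩
  have hτ := Algebra.TensorProduct.congr_involutive hσ1 hσ2
  have hpolar (x y : K1 ⊗[F] K2) : QuadraticMap.polar Nrd (α x) (α y) =
      Algebra.trace F _ (ξ * x * Algebra.TensorProduct.congr σ1 σ2 y) := by
    rw [← polar_eq_trace_mul hτ (trace_congr_comp_mulLeft_eq_zero σ2 q1.trace_comp_mulLeft) ξ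
      (Nrd ∘ α) hξ x y]
    simp only [QuadraticMap.polar, Function.comp_apply, map_add]
  have hdim : Module.finrank F (K1 ⊗[F] K2) = Module.finrank F B := by
    rw [Module.finrank_tensorProduct, hK1, hK2, hB]
  rw [adjoin_range_union_eq_top_iff hι hα,
    ← LinearMap.injective_iff_surjective_of_finrank_eq_finrank hdim]
  constructor
  · intro hinj
    exact isUnit_of_bijective hι (by omega)
      ⟨hinj, (LinearMap.injective_iff_surjective_of_finrank_eq_finrank hdim).mp hinj⟩ ξ hpolar
  · intro hunit
    exact injective_of_isUnit hι (separatingLeft_traceForm_tensorProduct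
      (q1.separatingLeft_traceForm hσ1ne) (q2.separatingLeft_traceForm hσ2ne))
      (hunit.map (Subalgebra.val _)) hτ.surjective hpolar

/-- In the setting of the invariant `ξ ∈ K3` attached to a quaternion
embedding `(B, α1, α2)` of a pair of quadratic étale `F`-algebras `(K1, K2)` (so that
`Nrd (α x) = Tr_{K3/F} (ξ * x * τ3 x)` for all `x ∈ K = K1 ⊗[F] K2`): the triple
`(B, α1, α2)` is regular, i.e. `α1(K1) ∪ α2(K2)` generates `B` as an `F`-algebra, if and
only if `ξ` is a unit in `K3`. -/
theorem stmt2 (F : Type u) [Field F]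
    (K1 K2 : Type u) [CommRing K1] [CommRing K2] [Algebra F K1] [Algebra F K2]
    [Algebra.Etale F K1] [Algebra.Etale F K2]
    (hK1 : Module.finrank F K1 = 2) (hK2 : Module.finrank F K2 = 2)
    (σ1 : K1 ≃ₐ[F] K1) (σ2 : K2 ≃ₐ[F] K2)
    (hσ1 : Function.Involutive σ1) (hσ2 : Function.Involutive σ2)
    (hσ1ne : σ1 ≠ AlgEquiv.refl) (hσ2ne : σ2 ≠ AlgEquiv.refl)
    (B : Type u) [Ring B] [Algebra F B]
    [Algebra.IsCentral F B] [IsSimpleRing B] (hB : Module.finrank F B = 4)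
    (ι : B → B) (Nrd : B → F)
    (hι_add : ∀ a b : B, ι (a + b) = ι a + ι b)
    (hι_mul : ∀ a b : B, ι (a * b) = ι b * ι a)
    (hι_inv : Function.Involutive ι)
    (hι_alg : ∀ c : F, ι (algebraMap F B c) = algebraMap F B c)
    (hNrd : ∀ b : B, algebraMap F B (Nrd b) = b * ι b)
    (α1 : K1 →ₐ[F] B) (α2 : K2 →ₐ[F] B)
    (hα1 : Function.Injective α1) (hα2 : Function.Injective α2)
    (α : K1 ⊗[F] K2 →ₗ[F] B)
    (hα : ∀ (x : K1) (y : K2), α (x ⊗ₜ[F] y) = α1 x * α2 y)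
    (τ3 : (K1 ⊗[F] K2) ≃ₐ[F] (K1 ⊗[F] K2)) (hτ3 : τ3 = Algebra.TensorProduct.congr σ1 σ2)
    (K3 : Subalgebra F (K1 ⊗[F] K2))
    (hK3 : K3 = AlgHom.equalizer (τ3 : (K1 ⊗[F] K2) →ₐ[F] (K1 ⊗[F] K2))
        (AlgHom.id F (K1 ⊗[F] K2)))
    -- `ξ` is the invariant of `(B, α1, α2)`
    (ξ : K3)
    (hξ : ∀ (x : K1 ⊗[F] K2) (h : (ξ : K1 ⊗[F] K2) * x * τ3 x ∈ K3),
        Nrd (α x) = Algebra.trace F K3 ⟨(ξ : K1 ⊗[F] K2) * x * τ3 x, h⟩) :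
    Algebra.adjoin F (Set.range α1 ∪ Set.range α2) = ⊤ ↔ IsUnit ξ :=
  stmt2_general F K1 K2 hK1 hK2 σ1 σ2 hσ1 hσ2 hσ1ne hσ2ne B hB ι Nrd hι_add hι_mul hι_alg hNrd α1 α2
    α hα τ3 hτ3 K3 hK3 ξ hξ
end Quadratic
end

section
/- Let F be a field, A ⊂ M2(F) the diagonal subalgebra, and for γ = [[a,b],[c,d]] ∈ GL2(F), define inv(γ) = (ad/(ad−bc), −bc/(ad−bc)) ∈ F × F. Call γ regular if ad ≠ 0 and bc ≠ 0. Then inv induces a bijection from the set of regular double cosets in A^× \ GL2(F) / A^× to the set { (u,v) ∈ F^× × F^× : u + v = 1 }. -/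
open Matrix

/-- A diagonal invertible matrix, i.e. an element of `A^×` where `A ⊆ M₂(F)` is the
diagonal subalgebra. -/
def IsDiagUnit {F : Type*} [Field F] (t : Matrix (Fin 2) (Fin 2) F) : Prop :=
  (∃ e : Fin 2 → F, t = Matrix.diagonal e ∧ e 0 ≠ 0 ∧ e 1 ≠ 0)

/-- `γ` and `γ'` lie in the same double coset `A^× γ A^× = A^× γ' A^×`. -/
def SameDoubleCoset {F : Type*} [Field F] (γ γ' : Matrix (Fin 2) (Fin 2) F) : Prop :=
  ∃ t s : Matrix (Fin 2) (Fin 2) F, IsDiagUnit t ∧ IsDiagUnit s ∧ γ' = t * γ * s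

/-- The invariant `inv(γ) = (ad/(ad − bc), −bc/(ad − bc))` of `γ = [[a,b],[c,d]]`. -/
noncomputable def matInv {F : Type*} [Field F] (γ : Matrix (Fin 2) (Fin 2) F) : F × F :=
  (γ 0 0 * γ 1 1 / (γ 0 0 * γ 1 1 - γ 0 1 * γ 1 0),
   -(γ 0 1 * γ 1 0) / (γ 0 0 * γ 1 1 - γ 0 1 * γ 1 0))

/-- `γ = [[a,b],[c,d]]` is regular: `ad ≠ 0` and `bc ≠ 0`. -/
def MatRegular {F : Type*} [Field F] (γ : Matrix (Fin 2) (Fin 2) F) : Prop :=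
  γ 0 0 * γ 1 1 ≠ 0 ∧ γ 0 1 * γ 1 0 ≠ 0

/-!
Scaling rows and columns of `γ = [[a,b],[c,d]]` by nonzero diagonal entries multiplies `ad` and
`bc` by the same factor, so `inv(γ)` is constant on double cosets. Conversely, a regular `γ` can
be scaled to `[[1,x],[1,1]]` with `x = bc/(ad)`, and `x = -v/u` is read off `inv(γ) = (u,v)`,
so equal invariants give the same normal form; `[[1,-v/u],[1,1]]` realizes every `(u,v)`.
-/

section

variable {F : Type*} [Field F]

theorem det_fin_two_ne_zero {γ : Matrix (Fin 2) (Fin 2) F} (h : IsUnit γ.det) :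
    γ 0 0 * γ 1 1 - γ 0 1 * γ 1 0 ≠ 0 := by
  simpa [det_fin_two] using h.ne_zero

theorem matInv_fst_add_snd {γ : Matrix (Fin 2) (Fin 2) F}
    (hD : γ 0 0 * γ 1 1 - γ 0 1 * γ 1 0 ≠ 0) : (matInv γ).1 + (matInv γ).2 = 1 := by
  rw [matInv, ← add_div, div_eq_one_iff_eq hD]
  ring

namespace IsDiagUnit

theorem mul {t t' : Matrix (Fin 2) (Fin 2) F} (ht : IsDiagUnit t) (ht' : IsDiagUnit t') :
    IsDiagUnit (t * t') := by
  obtain ⟨e, rfl, he0, he1⟩ := ht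
  obtain ⟨e', rfl, he0', he1'⟩ := ht'
  exact ⟨e * e', diagonal_mul_diagonal' e e', mul_ne_zero he0 he0',
    mul_ne_zero he1 he1'⟩

theorem exists_inv_mul {t : Matrix (Fin 2) (Fin 2) F} (ht : IsDiagUnit t) :
    ∃ t', IsDiagUnit t' ∧ t' * t = 1 ∧ t * t' = 1 := by
  obtain ⟨e, rfl, he0, he1⟩ := ht
  have he : ∀ i, e i ≠ 0 := by
    intro i; fin_cases i <;> assumption
  refine ⟨diagonal e⁻¹, ⟨e⁻¹, rfl, inv_ne_zero he0, inv_ne_zero he1⟩, ?_, ?_⟩ <;>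
    rw [diagonal_mul_diagonal', ← diagonal_one] <;> congr 1 <;> funext i
  exacts [inv_mul_cancel₀ (he i), mul_inv_cancel₀ (he i)]

end IsDiagUnit

namespace SameDoubleCoset

theorem symm {γ γ' : Matrix (Fin 2) (Fin 2) F} (h : SameDoubleCoset γ γ') :
    SameDoubleCoset γ' γ := by
  obtain ⟨t, s, ht, hs, rfl⟩ := h
  obtain ⟨t', ht', htt', -⟩ := ht.exists_inv_mul
  obtain ⟨s', hs', -, hss'⟩ := hs.exists_inv_mul
  refine ⟨t', s', ht', hs', ?_⟩
  simp only [← Matrix.mul_assoc, htt', Matrix.one_mul]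
  rw [Matrix.mul_assoc, hss', Matrix.mul_one]

theorem trans {γ γ' γ'' : Matrix (Fin 2) (Fin 2) F} (h : SameDoubleCoset γ γ')
    (h' : SameDoubleCoset γ' γ'') : SameDoubleCoset γ γ'' := by
  obtain ⟨t, s, ht, hs, rfl⟩ := h
  obtain ⟨t', s', ht', hs', rfl⟩ := h'
  exact ⟨t' * t, s * s', ht'.mul ht, hs.mul hs', by simp only [Matrix.mul_assoc]⟩

theorem matInv_eq {γ γ' : Matrix (Fin 2) (Fin 2) F} (h : SameDoubleCoset γ γ') :
    matInv γ = matInv γ' := by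
  obtain ⟨_, _, ⟨e, rfl, he0, he1⟩, ⟨f, rfl, hf0, hf1⟩, rfl⟩ := h
  have hk : e 0 * e 1 * (f 0 * f 1) ≠ 0 := by positivity
  simp only [matInv, mul_diagonal, diagonal_mul, Prod.mk.injEq]
  constructor <;>
  · rw [← mul_div_mul_left _ (γ 0 0 * γ 1 1 - γ 0 1 * γ 1 0) hk]
    ring_nf

end SameDoubleCoset

def normalForm (x : F) : Matrix (Fin 2) (Fin 2) F := !![1, x; 1, 1]

noncomputable def offDiagRatio (γ : Matrix (Fin 2) (Fin 2) F) : F :=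
  γ 0 1 * γ 1 0 / (γ 0 0 * γ 1 1)

theorem MatRegular.sameDoubleCoset_normalForm {γ : Matrix (Fin 2) (Fin 2) F}
    (hγ : MatRegular γ) : SameDoubleCoset γ (normalForm (offDiagRatio γ)) := by
  have ha : γ 0 0 ≠ 0 := left_ne_zero_of_mul hγ.1
  have hd : γ 1 1 ≠ 0 := right_ne_zero_of_mul hγ.1
  have hc : γ 1 0 ≠ 0 := right_ne_zero_of_mul hγ.2
  refine ⟨diagonal ![1, γ 0 0 / γ 1 0], diagonal ![(γ 0 0)⁻¹, γ 1 0 / (γ 0 0 * γ 1 1)],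
    ⟨_, rfl, one_ne_zero, by simp [ha, hc]⟩, ⟨_, rfl, by simp [ha], by simp [ha, hd, hc]⟩, ?_⟩
  ext i j
  fin_cases i <;> fin_cases j <;>
    simp [normalForm, offDiagRatio, mul_diagonal, diagonal_mul] <;> field_simp

theorem matInv_snd_div_fst {γ : Matrix (Fin 2) (Fin 2) F}
    (hD : γ 0 0 * γ 1 1 - γ 0 1 * γ 1 0 ≠ 0) :
    (matInv γ).2 / (matInv γ).1 = -offDiagRatio γ := by
  rw [matInv, offDiagRatio, div_div_div_cancel_right₀ hD, neg_div]

theorem det_normalForm (x : F) : (normalForm x).det = 1 - x := by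
  simp [normalForm, det_fin_two]

theorem matInv_normalForm (x : F) : matInv (normalForm x) = (1 / (1 - x), -x / (1 - x)) := by
  simp [matInv, normalForm]

end

/-- For `γ ∈ GL₂(F)` regular (i.e. `ad ≠ 0` and `bc ≠ 0`), the invariant
`inv(γ) = (ad/(ad−bc), −bc/(ad−bc))` lies in `{(u,v) ∈ F^× × F^× : u + v = 1}`; two regular
elements of `GL₂(F)` have the same invariant iff they lie in the same double coset
`A^× \ GL₂(F) / A^×`; and every `(u,v)` with `u, v ≠ 0`, `u + v = 1` is the invariant of some
regular `γ ∈ GL₂(F)`.  Thus `inv` induces a bijection from the set of regular double cosets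
onto `{(u,v) ∈ F^× × F^× : u + v = 1}`. -/
theorem stmt3 (F : Type*) [Field F] :
    (∀ γ : Matrix (Fin 2) (Fin 2) F, IsUnit γ.det → MatRegular γ →
      (matInv γ).1 ≠ 0 ∧ (matInv γ).2 ≠ 0 ∧ (matInv γ).1 + (matInv γ).2 = 1) ∧
    (∀ γ γ' : Matrix (Fin 2) (Fin 2) F, IsUnit γ.det → IsUnit γ'.det →
      MatRegular γ → MatRegular γ' →
      (matInv γ = matInv γ' ↔ SameDoubleCoset γ γ')) ∧
    (∀ u v : F, u ≠ 0 → v ≠ 0 → u + v = 1 →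
      ∃ γ : Matrix (Fin 2) (Fin 2) F, IsUnit γ.det ∧ MatRegular γ ∧ matInv γ = (u, v)) := by
  refine ⟨fun γ hdet hγ => ?_, fun γ γ' hdet hdet' hγ hγ' => ?_, fun u v hu hv huv => ?_⟩
  · have hD := det_fin_two_ne_zero hdet
    exact ⟨div_ne_zero hγ.1 hD, div_ne_zero (neg_ne_zero.mpr hγ.2) hD, matInv_fst_add_snd hD⟩
  · refine ⟨fun h => ?_, fun h => h.matInv_eq⟩
    have hx : offDiagRatio γ = offDiagRatio γ' := by
      rw [← neg_inj, ← matInv_snd_div_fst (det_fin_two_ne_zero hdet),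
        ← matInv_snd_div_fst (det_fin_two_ne_zero hdet'), h]
    exact hγ.sameDoubleCoset_normalForm.trans (hx ▸ hγ'.sameDoubleCoset_normalForm.symm)
  · have hden : 1 - -v / u = 1 / u := by
      field_simp
      linear_combination huv
    refine ⟨normalForm (-v / u), ?_, ⟨by simp [normalForm], by simp [normalForm, hu, hv]⟩, ?_⟩
    · rw [det_normalForm, hden, isUnit_iff_ne_zero]
      exact one_div_ne_zero hu
    · rw [matInv_normalForm, hden]
      ext <;> field_simp
end

section
/- Let K1 and K2 be quadratic étale algebras over a field F, and K = K1 ⊗_F K2. Then K1 ≅ K2 as F-algebras if and only if the fixed algebra K3 of the automorphism τ3 = σ1 ⊗ σ2 of K is isomorphic to F ⊕ F. -/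
/-!
Write `Kᵢ = F ⊕ F ωᵢ` with `ωᵢ² = aᵢ + bᵢ ωᵢ`; the nontrivial involution is `ωᵢ ↦ bᵢ - ωᵢ`, and
étaleness makes the discriminant `Δᵢ = bᵢ² + 4aᵢ` nonzero. With `A = ω₁ ⊗ 1` and `B = 1 ⊗ ω₂`, the
element `γ` with `2γ + b₁b₂ = (2A - b₁)(2B - b₂)` is fixed by `σ₁ ⊗ σ₂`, and a coordinate
computation in the basis `1, A, B, AB` shows `K₃ = F ⊕ F γ`, where `γ² + b₁b₂ γ ∈ F` and the
discriminant of `γ` is `Δ₁Δ₂`. Two such algebras are isomorphic iff the generator of the first has a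
conjugate in the second, so `K₁ ≅ K₂` iff `X² - b₁X - a₁` has a root in `K₂ ∖ F`, and `K₃ ≅ F × F`
iff `K₃` has an idempotent outside `F`. Away from characteristic 2 both conditions say that `Δ₁Δ₂`
is a nonzero square; in characteristic 2 the two solutions correspond by an explicit substitution.
-/

open scoped TensorProduct
open Module

universe u

theorem nonempty_algEquiv_comm {R A B : Type*} [CommSemiring R] [Semiring A] [Semiring B]
    [Algebra R A] [Algebra R B] : Nonempty (A ≃ₐ[R] B) ↔ Nonempty (B ≃ₐ[R] A) :=
  ⟨fun ⟨e⟩ ↦ ⟨e.symm⟩, fun ⟨e⟩ ↦ ⟨e.symm⟩⟩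

variable {F : Type*} [Field F]

theorem eq_zero_of_algebraMap_add_mul_eq_zero {K : Type*} [Ring K] [Algebra F K] {ω : K}
    (hω : ω ∉ Set.range (algebraMap F K)) {x y : F}
    (h : algebraMap F K x + algebraMap F K y * ω = 0) : x = 0 ∧ y = 0 := by
  have hy : y = 0 := by
    by_contra hy
    refine hω ⟨-(y⁻¹ * x), ?_⟩
    rw [map_neg, map_mul, ← mul_neg, eq_neg_of_add_eq_zero_left h, neg_neg, ← mul_assoc,
      ← map_mul, inv_mul_cancel₀ hy, map_one, one_mul]
  have : Nontrivial K := nontrivial_of_ne ω 0 fun h0 ↦ hω ⟨0, by rw [map_zero, h0]⟩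
  subst hy
  simpa using h

structure IsQuadraticGenerator {K : Type*} [CommRing K] [Algebra F K] (ω : K) (a b : F) :
    Prop where
  notMem_range : ω ∉ Set.range (algebraMap F K)
  exists_eq : ∀ z : K, ∃ x y : F, z = algebraMap F K x + algebraMap F K y * ω
  sq_eq : ω ^ 2 = algebraMap F K a + algebraMap F K b * ω

namespace IsQuadraticGenerator

variable {K K' : Type*} [CommRing K] [Algebra F K] [CommRing K'] [Algebra F K']
  {ω : K} {a b : F}

theorem mul_self_eq (h : IsQuadraticGenerator ω a b) : ω * ω = a • 1 + b • ω := by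
  rw [← sq, h.sq_eq, Algebra.smul_def, Algebra.smul_def, mul_one]

theorem bijective_lift (h : IsQuadraticGenerator ω a b) :
    Function.Bijective (QuadraticAlgebra.lift ⟨ω, h.mul_self_eq⟩) := by
  refine ⟨(injective_iff_map_eq_zero _).2 fun z hz ↦ ?_, fun z ↦ ?_⟩
  · simp only [QuadraticAlgebra.lift_apply_apply, Algebra.smul_def, mul_one] at hz
    obtain ⟨h1, h2⟩ := eq_zero_of_algebraMap_add_mul_eq_zero h.notMem_range hz
    ext <;> simp [h1, h2]
  · obtain ⟨x, y, rfl⟩ := h.exists_eq z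
    exact ⟨⟨x, y⟩, by simp [Algebra.smul_def]⟩

noncomputable def algEquiv (h : IsQuadraticGenerator ω a b) : QuadraticAlgebra F a b ≃ₐ[F] K :=
  AlgEquiv.ofBijective _ h.bijective_lift

theorem algEquiv_mk (h : IsQuadraticGenerator ω a b) (x y : F) :
    h.algEquiv ⟨x, y⟩ = algebraMap F K x + algebraMap F K y * ω := by
  simp [algEquiv, Algebra.smul_def]

noncomputable def basis (h : IsQuadraticGenerator ω a b) : Basis (Fin 2) F K :=
  (QuadraticAlgebra.basis a b).map h.algEquiv.toLinearEquiv

@[simp]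
theorem basis_zero (h : IsQuadraticGenerator ω a b) : h.basis 0 = 1 := by
  simp [basis, QuadraticAlgebra.basis, h.algEquiv_mk]

@[simp]
theorem basis_one (h : IsQuadraticGenerator ω a b) : h.basis 1 = ω := by
  simp [basis, QuadraticAlgebra.basis, h.algEquiv_mk]

theorem sq_apply_eq (h : IsQuadraticGenerator ω a b) (f : K →ₐ[F] K') :
    f ω ^ 2 = algebraMap F K' a + algebraMap F K' b * f ω := by
  rw [← map_pow, h.sq_eq, map_add, map_mul, AlgHom.commutes, AlgHom.commutes]

theorem map (h : IsQuadraticGenerator ω a b) (e : K ≃ₐ[F] K') :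
    IsQuadraticGenerator (e ω) a b where
  notMem_range := fun ⟨x, hx⟩ ↦
    h.notMem_range ⟨x, by rw [← e.symm_apply_apply ω, ← hx, AlgEquiv.commutes]⟩
  exists_eq z := by
    obtain ⟨x, y, hz⟩ := h.exists_eq (e.symm z)
    exact ⟨x, y, by rw [← e.apply_symm_apply z, hz]; simp⟩
  sq_eq := h.sq_apply_eq e.toAlgHom

theorem sq_algebraMap_add_mul_eq_iff (h : IsQuadraticGenerator ω a b) (x y a' b' : F) :
    (algebraMap F K x + algebraMap F K y * ω) ^ 2 =
        algebraMap F K a' + algebraMap F K b' * (algebraMap F K x + algebraMap F K y * ω) ↔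
      x ^ 2 + a * y ^ 2 = a' + b' * x ∧ y * (2 * x + b * y - b') = 0 := by
  rw [← sub_eq_zero]
  have key : (algebraMap F K x + algebraMap F K y * ω) ^ 2 -
      (algebraMap F K a' + algebraMap F K b' * (algebraMap F K x + algebraMap F K y * ω)) =
      algebraMap F K (x ^ 2 + a * y ^ 2 - (a' + b' * x)) +
        algebraMap F K (y * (2 * x + b * y - b')) * ω := by
    simp only [map_add, map_sub, map_mul, map_pow, map_ofNat]
    linear_combination (algebraMap F K y) ^ 2 * h.sq_eq
  rw [key, ← sub_eq_zero (a := x ^ 2 + a * y ^ 2)]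
  constructor
  · exact eq_zero_of_algebraMap_add_mul_eq_zero h.notMem_range
  · rintro ⟨h1, h2⟩
    simp [h1, h2]

theorem of_sq_eq (h : IsQuadraticGenerator ω a b) {z : K}
    (hz : z ∉ Set.range (algebraMap F K)) {a' b' : F}
    (hsq : z ^ 2 = algebraMap F K a' + algebraMap F K b' * z) : IsQuadraticGenerator z a' b' := by
  obtain ⟨c, d, rfl⟩ := h.exists_eq z
  have hd : d ≠ 0 := by
    rintro rfl
    exact hz ⟨c, by simp⟩
  refine ⟨hz, fun w ↦ ?_, hsq⟩
  obtain ⟨x, y, rfl⟩ := h.exists_eq w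
  refine ⟨x - y * d⁻¹ * c, y * d⁻¹, ?_⟩
  have hdd : algebraMap F K d⁻¹ * algebraMap F K d = 1 := by
    rw [← map_mul, inv_mul_cancel₀ hd, map_one]
  simp only [map_sub, map_mul]
  linear_combination (-(algebraMap F K y * ω)) * hdd

theorem nonempty_algEquiv_iff {ω' : K'} {a' b' : F} (h : IsQuadraticGenerator ω a b)
    (h' : IsQuadraticGenerator ω' a' b') :
    Nonempty (K ≃ₐ[F] K') ↔
      ∃ x y : F, y ≠ 0 ∧ 2 * x + b' * y = b ∧ x ^ 2 + a' * y ^ 2 = a + b * x := by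
  constructor
  · rintro ⟨e⟩
    have he := h.map e
    obtain ⟨x, y, hxy⟩ := h'.exists_eq (e ω)
    have hy : y ≠ 0 := by
      rintro rfl
      exact he.notMem_range ⟨x, by simp [hxy]⟩
    have hsq := he.sq_eq
    rw [hxy, h'.sq_algebraMap_add_mul_eq_iff] at hsq
    obtain ⟨h1, h2⟩ := hsq
    exact ⟨x, y, hy, by linear_combination (mul_eq_zero.1 h2).resolve_left hy, h1⟩
  · rintro ⟨x, y, hy, h1, h2⟩
    have hz : algebraMap F K' x + algebraMap F K' y * ω' ∉ Set.range (algebraMap F K') := by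
      rintro ⟨c, hc⟩
      have h0 : algebraMap F K' (x - c) + algebraMap F K' y * ω' = 0 := by
        rw [map_sub, hc]; ring
      exact hy (eq_zero_of_algebraMap_add_mul_eq_zero h'.notMem_range h0).2
    have hsq := (h'.sq_algebraMap_add_mul_eq_iff x y a b).2 ⟨h2, by rw [h1, sub_self, mul_zero]⟩
    exact ⟨h.algEquiv.symm.trans (h'.of_sq_eq hz hsq).algEquiv⟩

end IsQuadraticGenerator

section FiniteDimensional

variable {K : Type*} [CommRing K] [Algebra F K]

theorem exists_isQuadraticGenerator_of_notMem_range (hK : finrank F K = 2) {ω : K}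
    (hω : ω ∉ Set.range (algebraMap F K)) : ∃ a b : F, IsQuadraticGenerator ω a b := by
  have hli : LinearIndependent F ![1, ω] := LinearIndependent.pair_iff.2 fun s t hst ↦
    eq_zero_of_algebraMap_add_mul_eq_zero hω (by simpa [Algebra.smul_def] using hst)
  let bK := basisOfLinearIndependentOfCardEqFinrank hli (by simp [hK])
  have hcoords (z : K) : ∃ x y : F, z = algebraMap F K x + algebraMap F K y * ω :=
    ⟨bK.repr z 0, bK.repr z 1, by
      conv_lhs => rw [← bK.sum_repr z]
      simp [bK, Fin.sum_univ_two, Algebra.smul_def]⟩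
  obtain ⟨x, y, hxy⟩ := hcoords (ω ^ 2)
  exact ⟨x, y, hω, hcoords, hxy⟩

theorem exists_isQuadraticGenerator (hK : finrank F K = 2) :
    ∃ (ω : K) (a b : F), IsQuadraticGenerator ω a b := by
  have : Nontrivial K := Module.nontrivial_of_finrank_pos (R := F) (by omega)
  have hbot : (⊥ : Subalgebra F K) ≠ ⊤ := fun h ↦ by
    simp [Subalgebra.bot_eq_top_iff_finrank_eq_one.1 h] at hK
  obtain ⟨ω, -, hω⟩ := SetLike.exists_of_lt hbot.lt_top
  exact ⟨ω, exists_isQuadraticGenerator_of_notMem_range hK (by simpa [Algebra.mem_bot] using hω)⟩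

end FiniteDimensional

theorem isQuadraticGenerator_prod : IsQuadraticGenerator ((1, 0) : F × F) (0 : F) 1 where
  notMem_range := fun ⟨c, hc⟩ ↦ by
    obtain ⟨rfl, h0⟩ : c = 1 ∧ c = 0 := by simpa [Prod.ext_iff] using hc
    exact one_ne_zero h0
  exists_eq z := ⟨z.2, z.1 - z.2, by ext <;> simp⟩
  sq_eq := by ext <;> simp

section Involution

variable {K : Type*} [CommRing K] [Algebra F K] {σ : K ≃ₐ[F] K}

theorem mem_range_of_apply_eq
    (hfix : AlgHom.equalizer (σ : K →ₐ[F] K) (AlgHom.id F K) = ⊥) {x : K} (hx : σ x = x) :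
    x ∈ Set.range (algebraMap F K) := by
  rw [← Algebra.mem_bot, ← hfix]
  exact hx

namespace IsQuadraticGenerator

variable {ω : K} {a b : F}

theorem apply_eq_sub (h : IsQuadraticGenerator ω a b) (hσ : Function.Involutive σ)
    (hfix : AlgHom.equalizer (σ : K →ₐ[F] K) (AlgHom.id F K) = ⊥) :
    σ ω = algebraMap F K b - ω := by
  obtain ⟨s, hs⟩ := mem_range_of_apply_eq hfix (x := σ ω + ω) (by rw [map_add, hσ ω, add_comm])
  have hσω : σ ω = algebraMap F K s + algebraMap F K (-1) * ω := by rw [hs]; simp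
  have hsq := h.sq_eq
  rw [← (AlgEquiv.injective σ).eq_iff, map_pow, map_add, map_mul, AlgEquiv.commutes,
    AlgEquiv.commutes, hσω, h.sq_algebraMap_add_mul_eq_iff] at hsq
  obtain ⟨h1, h2⟩ := hsq
  suffices s = b by rw [hσω, this]; simp [sub_eq_add_neg]
  by_contra hsb
  have h2F : (2 : F) = 0 := by
    have : 2 * (s - b) = 0 := by linear_combination -h2
    exact (mul_eq_zero.1 this).resolve_right (sub_ne_zero.2 hsb)
  have hs0 : s = 0 := by
    have : s * (s - b) = 0 := by linear_combination h1
    exact (mul_eq_zero.1 this).resolve_right (sub_ne_zero.2 hsb)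
  refine h.notMem_range (mem_range_of_apply_eq hfix ?_)
  have h2K : (2 : K) = 0 := by rw [← map_ofNat (algebraMap F K) 2, h2F, map_zero]
  rw [hσω, hs0]
  simp only [map_zero, map_neg, map_one, zero_add]
  linear_combination (-ω) * h2K

theorem discr_ne_zero [IsReduced K] (h : IsQuadraticGenerator ω a b)
    (hσω : σ ω = algebraMap F K b - ω)
    (hfix : AlgHom.equalizer (σ : K →ₐ[F] K) (AlgHom.id F K) = ⊥) : b ^ 2 + 4 * a ≠ 0 := by
  intro hΔ
  have hsq : (2 * ω - algebraMap F K b) ^ 2 = 0 := by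
    have : algebraMap F K (b ^ 2 + 4 * a) = 0 := by rw [hΔ, map_zero]
    simp only [map_add, map_mul, map_pow, map_ofNat] at this
    linear_combination this + 4 * h.sq_eq
  have h2ω : algebraMap F K b = 2 * ω := (sub_eq_zero.1 (IsReduced.eq_zero _ ⟨2, hsq⟩)).symm
  exact h.notMem_range (mem_range_of_apply_eq hfix (by rw [hσω, h2ω]; ring))

end IsQuadraticGenerator

end Involution

theorem ne_zero_of_discr_ne_zero {a b : F} (hΔ : b ^ 2 + 4 * a ≠ 0) (h2 : (2 : F) = 0) :
    b ≠ 0 := by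
  rintro rfl
  exact hΔ (by linear_combination (2 * a) * h2)

theorem exists_eq_of_fixed_coords {b₁ b₂ x₁ x₂ x₃ : F} (hb₂ : (2 : F) = 0 → b₂ ≠ 0)
    (h₀ : b₁ * x₁ + b₂ * x₂ + b₁ * b₂ * x₃ = 0) (h₁ : 2 * x₁ + b₂ * x₃ = 0)
    (h₂ : 2 * x₂ + b₁ * x₃ = 0) : ∃ t, x₁ = -(b₂ * t) ∧ x₂ = -(b₁ * t) ∧ x₃ = 2 * t := by
  by_cases h2 : (2 : F) = 0
  · have hb := hb₂ h2
    have hx₃ : x₃ = 0 := (mul_eq_zero.1 (by linear_combination h₁ - x₁ * h2)).resolve_left hb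
    subst hx₃
    refine ⟨-x₁ / b₂, by field_simp, ?_, by simp [h2]⟩
    field_simp
    linear_combination h₀ - b₁ * x₁ * h2
  · exact ⟨x₃ / 2, by field_simp; linear_combination h₁, by field_simp; linear_combination h₂,
      by field_simp⟩

section TensorProduct

variable {K₁ K₂ : Type*} [CommRing K₁] [CommRing K₂] [Algebra F K₁] [Algebra F K₂]
  {α : K₁} {β : K₂} {a₁ b₁ a₂ b₂ : F}

namespace IsQuadraticGenerator

theorem sum_tensorProduct_basis (h₁ : IsQuadraticGenerator α a₁ b₁)
    (h₂ : IsQuadraticGenerator β a₂ b₂) (f : Fin 2 × Fin 2 → F) :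
    ∑ i, f i • h₁.basis.tensorProduct h₂.basis i =
      algebraMap F (K₁ ⊗[F] K₂) (f (0, 0)) + algebraMap F _ (f (1, 0)) * (α ⊗ₜ 1) +
        algebraMap F _ (f (0, 1)) * (1 ⊗ₜ β) +
          algebraMap F _ (f (1, 1)) * ((α ⊗ₜ 1) * (1 ⊗ₜ β)) := by
  simp only [Fintype.sum_prod_type, Fin.sum_univ_two, Basis.tensorProduct_apply, basis_zero,
    basis_one, Algebra.smul_def, ← Algebra.TensorProduct.one_def, mul_one,
    Algebra.TensorProduct.tmul_mul_tmul, one_mul]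
  ring

theorem exists_eq_tensor (h₁ : IsQuadraticGenerator α a₁ b₁) (h₂ : IsQuadraticGenerator β a₂ b₂)
    (z : K₁ ⊗[F] K₂) : ∃ x₀ x₁ x₂ x₃ : F, z = algebraMap F (K₁ ⊗[F] K₂) x₀ +
      algebraMap F _ x₁ * (α ⊗ₜ 1) + algebraMap F _ x₂ * (1 ⊗ₜ β) +
        algebraMap F _ x₃ * ((α ⊗ₜ 1) * (1 ⊗ₜ β)) :=
  ⟨_, _, _, _, by rw [← sum_tensorProduct_basis h₁ h₂, Basis.sum_repr]⟩

theorem eq_zero_of_tensor_eq_zero (h₁ : IsQuadraticGenerator α a₁ b₁)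
    (h₂ : IsQuadraticGenerator β a₂ b₂) {x₀ x₁ x₂ x₃ : F}
    (h : algebraMap F (K₁ ⊗[F] K₂) x₀ + algebraMap F _ x₁ * (α ⊗ₜ 1) +
      algebraMap F _ x₂ * (1 ⊗ₜ β) + algebraMap F _ x₃ * ((α ⊗ₜ 1) * (1 ⊗ₜ β)) = 0) :
    x₀ = 0 ∧ x₁ = 0 ∧ x₂ = 0 ∧ x₃ = 0 := by
  have := Fintype.linearIndependent_iff.1 (h₁.basis.tensorProduct h₂.basis).linearIndependent
    (fun i ↦ ![![x₀, x₂], ![x₁, x₃]] i.1 i.2) (by rw [sum_tensorProduct_basis h₁ h₂]; simpa using h)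
  exact ⟨this (0, 0), this (1, 0), this (0, 1), this (1, 1)⟩

end IsQuadraticGenerator

variable {σ₁ : K₁ ≃ₐ[F] K₁} {σ₂ : K₂ ≃ₐ[F] K₂}

theorem congr_tmul_one (hσ₁ : σ₁ α = algebraMap F K₁ b₁ - α) :
    Algebra.TensorProduct.congr σ₁ σ₂ (α ⊗ₜ 1) = algebraMap F (K₁ ⊗[F] K₂) b₁ - α ⊗ₜ 1 := by
  simp [hσ₁, TensorProduct.sub_tmul, Algebra.TensorProduct.algebraMap_apply]

theorem congr_one_tmul (hσ₂ : σ₂ β = algebraMap F K₂ b₂ - β) :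
    Algebra.TensorProduct.congr σ₁ σ₂ (1 ⊗ₜ β) = algebraMap F (K₁ ⊗[F] K₂) b₂ - 1 ⊗ₜ β := by
  simp [hσ₂, TensorProduct.tmul_sub, ← Algebra.TensorProduct.algebraMap_apply']

variable (α β b₁ b₂) in
/-- With `A = α ⊗ 1` and `B = 1 ⊗ β`, `2 • fixedGen + b₁ b₂ = (2A - b₁)(2B - b₂)` is a product of
square roots of the two discriminants, and `σ₁ ⊗ σ₂` changes the sign of both factors. -/
noncomputable def fixedGen : K₁ ⊗[F] K₂ :=
  2 * ((α ⊗ₜ 1) * (1 ⊗ₜ β)) - algebraMap F _ b₂ * (α ⊗ₜ 1) - algebraMap F _ b₁ * (1 ⊗ₜ β)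

theorem congr_fixedGen (hσ₁ : σ₁ α = algebraMap F K₁ b₁ - α)
    (hσ₂ : σ₂ β = algebraMap F K₂ b₂ - β) :
    Algebra.TensorProduct.congr σ₁ σ₂ (fixedGen α β b₁ b₂) = fixedGen α β b₁ b₂ := by
  simp only [fixedGen, map_sub, map_mul, map_ofNat, AlgEquiv.commutes, congr_tmul_one hσ₁,
    congr_one_tmul hσ₂]
  ring

theorem fixedGen_sq (h₁ : IsQuadraticGenerator α a₁ b₁) (h₂ : IsQuadraticGenerator β a₂ b₂) :
    fixedGen α β b₁ b₂ ^ 2 = algebraMap F (K₁ ⊗[F] K₂) (a₁ * b₂ ^ 2 + a₂ * b₁ ^ 2 + 4 * a₁ * a₂) +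
      algebraMap F _ (-(b₁ * b₂)) * fixedGen α β b₁ b₂ := by
  have hA := h₁.sq_apply_eq (Algebra.TensorProduct.includeLeft : K₁ →ₐ[F] K₁ ⊗[F] K₂)
  have hB := h₂.sq_apply_eq (Algebra.TensorProduct.includeRight : K₂ →ₐ[F] K₁ ⊗[F] K₂)
  simp only [Algebra.TensorProduct.includeLeft_apply, Algebra.TensorProduct.includeRight_apply]
    at hA hB
  simp only [fixedGen, map_add, map_mul, map_pow, map_neg, map_ofNat]
  linear_combination (2 * (1 ⊗ₜ β) - algebraMap F (K₁ ⊗[F] K₂) b₂) ^ 2 * hA +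
    (algebraMap F (K₁ ⊗[F] K₂) b₁ ^ 2 + 4 * algebraMap F (K₁ ⊗[F] K₂) a₁) * hB

theorem fixedGen_notMem_range (h₁ : IsQuadraticGenerator α a₁ b₁)
    (h₂ : IsQuadraticGenerator β a₂ b₂) (hb₂ : (2 : F) = 0 → b₂ ≠ 0) :
    fixedGen α β b₁ b₂ ∉ Set.range (algebraMap F (K₁ ⊗[F] K₂)) := by
  rintro ⟨c, hc⟩
  obtain ⟨-, h₁', -, h₃'⟩ := h₁.eq_zero_of_tensor_eq_zero h₂ (x₀ := c) (x₁ := b₂) (x₂ := b₁)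
    (x₃ := -2) (by rw [hc, fixedGen]; simp only [map_neg, map_ofNat]; ring)
  exact hb₂ (by linear_combination -h₃') h₁'

theorem exists_eq_fixedGen_of_congr_apply_eq (h₁ : IsQuadraticGenerator α a₁ b₁)
    (h₂ : IsQuadraticGenerator β a₂ b₂) (hσ₁ : σ₁ α = algebraMap F K₁ b₁ - α)
    (hσ₂ : σ₂ β = algebraMap F K₂ b₂ - β) (hb₂ : (2 : F) = 0 → b₂ ≠ 0) {z : K₁ ⊗[F] K₂}
    (hz : Algebra.TensorProduct.congr σ₁ σ₂ z = z) :
    ∃ x t : F, z = algebraMap F _ x + algebraMap F _ t * fixedGen α β b₁ b₂ := by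
  obtain ⟨x₀, x₁, x₂, x₃, rfl⟩ := h₁.exists_eq_tensor h₂ z
  simp only [map_add, map_mul, AlgEquiv.commutes, congr_tmul_one hσ₁, congr_one_tmul hσ₂] at hz
  obtain ⟨e₀, e₁, e₂, -⟩ := h₁.eq_zero_of_tensor_eq_zero h₂
    (x₀ := b₁ * x₁ + b₂ * x₂ + b₁ * b₂ * x₃) (x₁ := -(2 * x₁ + b₂ * x₃))
    (x₂ := -(2 * x₂ + b₁ * x₃)) (x₃ := 0)
    (by simp only [map_add, map_mul, map_neg, map_ofNat, map_zero]; linear_combination hz)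
  obtain ⟨t, rfl, rfl, rfl⟩ :=
    exists_eq_of_fixed_coords hb₂ e₀ (neg_eq_zero.1 e₁) (neg_eq_zero.1 e₂)
  refine ⟨x₀, t, ?_⟩
  simp only [fixedGen, map_neg, map_mul, map_ofNat]
  ring

theorem isQuadraticGenerator_fixedGen (h₁ : IsQuadraticGenerator α a₁ b₁)
    (h₂ : IsQuadraticGenerator β a₂ b₂) (hσ₁ : σ₁ α = algebraMap F K₁ b₁ - α)
    (hσ₂ : σ₂ β = algebraMap F K₂ b₂ - β) (hb₂ : (2 : F) = 0 → b₂ ≠ 0) :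
    IsQuadraticGenerator (K := AlgHom.equalizer (Algebra.TensorProduct.congr σ₁ σ₂ :
        K₁ ⊗[F] K₂ →ₐ[F] K₁ ⊗[F] K₂) (AlgHom.id F _))
      ⟨fixedGen α β b₁ b₂, congr_fixedGen hσ₁ hσ₂⟩ (a₁ * b₂ ^ 2 + a₂ * b₁ ^ 2 + 4 * a₁ * a₂)
      (-(b₁ * b₂)) where
  notMem_range := fun ⟨c, hc⟩ ↦ fixedGen_notMem_range h₁ h₂ hb₂ ⟨c, congrArg Subtype.val hc⟩
  exists_eq z := by
    obtain ⟨x, t, hz⟩ := exists_eq_fixedGen_of_congr_apply_eq h₁ h₂ hσ₁ hσ₂ hb₂ z.2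
    exact ⟨x, t, Subtype.ext hz⟩
  sq_eq := Subtype.ext (fixedGen_sq h₁ h₂)

end TensorProduct

theorem exists_root_iff_exists_idempotent_of_two_ne_zero (h2 : (2 : F) ≠ 0) {a₁ b₁ a₂ b₂ : F}
    (hΔ₁ : b₁ ^ 2 + 4 * a₁ ≠ 0) (hΔ₂ : b₂ ^ 2 + 4 * a₂ ≠ 0) :
    (∃ x y : F, y ≠ 0 ∧ 2 * x + b₂ * y = b₁ ∧ x ^ 2 + a₂ * y ^ 2 = a₁ + b₁ * x) ↔
      ∃ x y : F, y ≠ 0 ∧ 2 * x + -(b₁ * b₂) * y = 1 ∧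
        x ^ 2 + (a₁ * b₂ ^ 2 + a₂ * b₁ ^ 2 + 4 * a₁ * a₂) * y ^ 2 = x := by
  have h4 : (4 : F) ≠ 0 := by
    rw [show (4 : F) = 2 * 2 by norm_num]
    exact mul_ne_zero h2 h2
  have root_iff (x y : F) (h : 2 * x + b₂ * y = b₁) :
      x ^ 2 + a₂ * y ^ 2 = a₁ + b₁ * x ↔ y ^ 2 * (b₂ ^ 2 + 4 * a₂) = b₁ ^ 2 + 4 * a₁ := by
    have key : 4 * (x ^ 2 + a₂ * y ^ 2 - (a₁ + b₁ * x)) =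
        y ^ 2 * (b₂ ^ 2 + 4 * a₂) - (b₁ ^ 2 + 4 * a₁) := by
      linear_combination (2 * x - b₁ - b₂ * y) * h
    rw [← sub_eq_zero, ← sub_eq_zero (a := y ^ 2 * _), ← key, mul_eq_zero, or_iff_right h4]
  have idempotent_iff (x y : F) (h : 2 * x + -(b₁ * b₂) * y = 1) :
      x ^ 2 + (a₁ * b₂ ^ 2 + a₂ * b₁ ^ 2 + 4 * a₁ * a₂) * y ^ 2 = x ↔
        y ^ 2 * ((b₁ ^ 2 + 4 * a₁) * (b₂ ^ 2 + 4 * a₂)) = 1 := by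
    have key : 4 * (x ^ 2 + (a₁ * b₂ ^ 2 + a₂ * b₁ ^ 2 + 4 * a₁ * a₂) * y ^ 2 - x) =
        y ^ 2 * ((b₁ ^ 2 + 4 * a₁) * (b₂ ^ 2 + 4 * a₂)) - 1 := by
      linear_combination (2 * x - 1 + b₁ * b₂ * y) * h
    rw [← sub_eq_zero, ← sub_eq_zero (a := y ^ 2 * _), ← key, mul_eq_zero, or_iff_right h4]
  constructor
  · rintro ⟨x, y, hy, h₁, h₂⟩
    have hd := (root_iff x y h₁).1 h₂
    have h₁' : 2 * ((1 + b₁ * b₂ * (y * (b₂ ^ 2 + 4 * a₂))⁻¹) / 2) +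
        -(b₁ * b₂) * (y * (b₂ ^ 2 + 4 * a₂))⁻¹ = 1 := by
      field_simp
      ring
    refine ⟨_, _, by simp [hy, hΔ₂], h₁', (idempotent_iff _ _ h₁').2 ?_⟩
    rw [← hd]
    field_simp
  · rintro ⟨x, y, hy, h₁, h₂⟩
    have hd := (idempotent_iff x y h₁).1 h₂
    have h₁' :
        2 * ((b₁ - b₂ * ((b₁ ^ 2 + 4 * a₁) * y)) / 2) + b₂ * ((b₁ ^ 2 + 4 * a₁) * y) = b₁ := by
      field_simp
      ring
    refine ⟨_, _, mul_ne_zero hΔ₁ hy, h₁', (root_iff _ _ h₁').2 ?_⟩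
    linear_combination (b₁ ^ 2 + 4 * a₁) * hd

theorem exists_root_iff_exists_idempotent_of_two_eq_zero (h2 : (2 : F) = 0) {a₁ b₁ a₂ b₂ : F}
    (hb₁ : b₁ ≠ 0) (hb₂ : b₂ ≠ 0) :
    (∃ x y : F, y ≠ 0 ∧ 2 * x + b₂ * y = b₁ ∧ x ^ 2 + a₂ * y ^ 2 = a₁ + b₁ * x) ↔
      ∃ x y : F, y ≠ 0 ∧ 2 * x + -(b₁ * b₂) * y = 1 ∧
        x ^ 2 + (a₁ * b₂ ^ 2 + a₂ * b₁ ^ 2 + 4 * a₁ * a₂) * y ^ 2 = x := by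
  constructor
  · rintro ⟨x, y, hy, h₁, h₂⟩
    refine ⟨x / b₁, (b₁ * b₂)⁻¹, by simp [hb₁, hb₂], ?_, ?_⟩
    · field_simp
      linear_combination (x - b₁) * h2
    · field_simp
      linear_combination b₂ ^ 2 * h₂ - a₂ * (b₁ + b₂ * y) * h₁ +
        (a₂ * x * (b₁ + b₂ * y) + a₁ * b₂ ^ 2 + 2 * a₁ * a₂) * h2
  · rintro ⟨x, y, hy, h₁, h₂⟩
    have hy' : y = (b₁ * b₂)⁻¹ := by
      field_simp
      linear_combination -h₁ + (x - 1) * h2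
    subst hy'
    refine ⟨b₁ * x, b₁ / b₂, by simp [hb₁, hb₂], ?_, ?_⟩
    · field_simp
      linear_combination x * h2
    · field_simp at h₂ ⊢
      linear_combination h₂ - (a₁ * b₂ ^ 2 + 2 * a₁ * a₂) * h2

theorem exists_root_iff_exists_idempotent {a₁ b₁ a₂ b₂ : F} (hΔ₁ : b₁ ^ 2 + 4 * a₁ ≠ 0)
    (hΔ₂ : b₂ ^ 2 + 4 * a₂ ≠ 0) :
    (∃ x y : F, y ≠ 0 ∧ 2 * x + b₂ * y = b₁ ∧ x ^ 2 + a₂ * y ^ 2 = a₁ + b₁ * x) ↔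
      ∃ x y : F, y ≠ 0 ∧ 2 * x + -(b₁ * b₂) * y = 1 ∧
        x ^ 2 + (a₁ * b₂ ^ 2 + a₂ * b₁ ^ 2 + 4 * a₁ * a₂) * y ^ 2 = x := by
  by_cases h2 : (2 : F) = 0
  · exact exists_root_iff_exists_idempotent_of_two_eq_zero h2
      (ne_zero_of_discr_ne_zero hΔ₁ h2) (ne_zero_of_discr_ne_zero hΔ₂ h2)
  · exact exists_root_iff_exists_idempotent_of_two_ne_zero h2 hΔ₁ hΔ₂

/-- Let `K1`, `K2` be quadratic étale algebras over a field `F`, with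
nontrivial automorphisms `σ1`, `σ2` (each an involution whose fixed subalgebra is `F`), and
let `K = K1 ⊗[F] K2` with the automorphism `τ3 = σ1 ⊗ σ2` and fixed subalgebra `K3`.
Then `K1 ≅ K2` as `F`-algebras if and only if `K3 ≅ F ⊕ F`. -/
theorem stmt7 (F : Type u) [Field F]
    (K1 K2 : Type u) [CommRing K1] [CommRing K2] [Algebra F K1] [Algebra F K2]
    [Algebra.Etale F K1] [Algebra.Etale F K2]
    (hK1 : Module.finrank F K1 = 2) (hK2 : Module.finrank F K2 = 2)
    (σ1 : K1 ≃ₐ[F] K1) (σ2 : K2 ≃ₐ[F] K2)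
    (hσ1 : Function.Involutive σ1) (hσ2 : Function.Involutive σ2)
    -- the fixed subalgebra of each `σᵢ` is `F` (so `σᵢ` is the nontrivial automorphism)
    (hfix1 : AlgHom.equalizer (σ1 : K1 →ₐ[F] K1) (AlgHom.id F K1) = ⊥)
    (hfix2 : AlgHom.equalizer (σ2 : K2 →ₐ[F] K2) (AlgHom.id F K2) = ⊥) :
    letI τ3 : (K1 ⊗[F] K2) ≃ₐ[F] (K1 ⊗[F] K2) := Algebra.TensorProduct.congr σ1 σ2
    letI K3 : Subalgebra F (K1 ⊗[F] K2) :=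
      AlgHom.equalizer (τ3 : (K1 ⊗[F] K2) →ₐ[F] (K1 ⊗[F] K2)) (AlgHom.id F (K1 ⊗[F] K2))
    (Nonempty (K1 ≃ₐ[F] K2) ↔ Nonempty (K3 ≃ₐ[F] (F × F))) := by
  have : IsReduced K1 := Algebra.FormallyUnramified.isReduced_of_field F K1
  have : IsReduced K2 := Algebra.FormallyUnramified.isReduced_of_field F K2
  obtain ⟨α, a₁, b₁, h₁⟩ := exists_isQuadraticGenerator hK1
  obtain ⟨β, a₂, b₂, h₂⟩ := exists_isQuadraticGenerator hK2
  have hσα := h₁.apply_eq_sub hσ1 hfix1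
  have hσβ := h₂.apply_eq_sub hσ2 hfix2
  have hΔ₁ := h₁.discr_ne_zero hσα hfix1
  have hΔ₂ := h₂.discr_ne_zero hσβ hfix2
  have h₃ := isQuadraticGenerator_fixedGen h₁ h₂ hσα hσβ (ne_zero_of_discr_ne_zero hΔ₂)
  rw [h₁.nonempty_algEquiv_iff h₂, nonempty_algEquiv_comm,
    isQuadraticGenerator_prod.nonempty_algEquiv_iff h₃]
  simpa only [zero_add, one_mul] using exists_root_iff_exists_idempotent hΔ₁ hΔ₂
end
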